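/- Mackey's formula for finite groups: let G be a finite group, H and K subgroups, R a ring, and M a right R[H]-module. Then there is an isomorphism of right R[K]-modules Res^G_K Ind^G_H M ≅ ⊕_{g} Ind^K_{K ∩ g⁻¹Hg} Res^{g⁻¹Hg}_{K ∩ g⁻¹Hg} (M·g), where g ranges over a set of representatives of the double cosets H\G/K, and M·g denotes M viewed as a right R[g⁻¹Hg]-module via conjugation by g. -/

import Mathlib

/- Every `y : G` can be written as `y = k * d⁻¹ * h` with `k ∈ K`, `h ∈ H` and a unique `d ∈ D`.
Restricting `f ∈ Ind^G_H M` to the cosets `K d⁻¹` gives `k ↦ f (k * d⁻¹)`, which lies in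
`Ind^K_{K ∩ d⁻¹Hd} (M·d)`; conversely a family `(F_d)` glues to `y ↦ F_d(k) · h`. The glued
function is well defined because two decompositions `k₁ d⁻¹ h₁ = k₂ d⁻¹ h₂` differ by
`k₂⁻¹ k₁ = d⁻¹ (h₂ h₁⁻¹) d ∈ K ∩ d⁻¹Hd`, which is exactly the equivariance built into `F_d`. -/

/- Encodings (Mathlib has no balanced tensor product over the noncommutative ring `R[H]`):
* A right `R[H]`-module is an additive group `M` with a right `R`-action
  (a `Rᵐᵒᵖ`-module structure) and a commuting right `H`-action (a
  `(↥H)ᵐᵒᵖ`-distributive action).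
* `Ind^G_H M = M ⊗_{R[H]} R[G]` is realised by its standard concrete model
  for finite groups: `{f : G → M | f (x·h) = f x · h}`, with `G` acting on
  the right by `(f·g)(x) = f (g·x)` and `R` acting pointwise on the right.
* Similarly `Ind^K_{L_g} (M·g)` (where `L_g = K ∩ g⁻¹Hg` and `M·g` is `M`
  with `L_g` acting through conjugation `l ↦ g l g⁻¹ ∈ H`) is realised as
  `{f : K → M | f (x·l) = f x · (g l g⁻¹)}`.
* The direct sum over `H\G/K` is the product over a set `D` of double coset
  representatives (a finite index set, so product = direct sum).
* An isomorphism of right `R[K]`-modules is an `Rᵐᵒᵖ`-linear equivalence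
  commuting with the right `K`-actions. -/

variable (R : Type*) [Ring R] (G : Type*) [Group G]

/-- The subgroup `K ∩ g⁻¹Hg`. -/
def interConj (H K : Subgroup G) (g : G) : Subgroup G :=
  K ⊓ Subgroup.map (MulAut.conj g⁻¹).toMonoidHom H

/-- For `l ∈ K ∩ g⁻¹Hg`, the element `g·l·g⁻¹` of `H`. -/
def conjElem (H K : Subgroup G) (g : G) (l : interConj G H K g) : H :=
  ⟨g * (l : G) * g⁻¹, by
    obtain ⟨h, hH, hh⟩ := Subgroup.mem_map.mp ((Subgroup.mem_inf.mp l.2).2)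
    have hl : (l : G) = g⁻¹ * h * g⁻¹⁻¹ := by
      rw [← hh]; rfl
    have : g * (l : G) * g⁻¹ = h := by rw [hl]; group
    rw [this]; exact hH⟩

/-- The concrete model of the induced module `Ind^G_H M = M ⊗_{R[H]} R[G]`
for a finite group: `{f : G → M | f (x·h) = f x · h}`, as an `Rᵐᵒᵖ`-submodule
of `G → M`. -/
def IndGH (H : Subgroup G) (M : Type*) [AddCommGroup M] [Module Rᵐᵒᵖ M]
    [DistribMulAction (↥H)ᵐᵒᵖ M] [SMulCommClass (↥H)ᵐᵒᵖ Rᵐᵒᵖ M] :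
    Submodule Rᵐᵒᵖ (G → M) where
  carrier := {f | ∀ (x : G) (h : H), f (x * (h : G)) = MulOpposite.op h • f x}
  add_mem' := by
    intro a b ha hb x h
    simp only [Pi.add_apply, ha x h, hb x h, smul_add]
  zero_mem' := by intro x h; simp
  smul_mem' := by
    intro r f hf x h
    simp only [Pi.smul_apply, hf x h]
    exact (smul_comm (MulOpposite.op h) r (f x)).symm

/-- The concrete model of `Ind^K_{L_g} (Res (M·g))`, where `L_g = K ∩ g⁻¹Hg`
acts on `M` through the conjugation `l ↦ g·l·g⁻¹ ∈ H`:
`{f : K → M | f (x·l) = f x · (g l g⁻¹)}`, as an `Rᵐᵒᵖ`-submodule of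
`K → M`. -/
def IndKL (H K : Subgroup G) (g : G) (M : Type*) [AddCommGroup M]
    [Module Rᵐᵒᵖ M] [DistribMulAction (↥H)ᵐᵒᵖ M]
    [SMulCommClass (↥H)ᵐᵒᵖ Rᵐᵒᵖ M] :
    Submodule Rᵐᵒᵖ (K → M) where
  carrier := {f | ∀ (x : K) (l : interConj G H K g),
    f (x * ⟨(l : G), (Subgroup.mem_inf.mp l.2).1⟩) =
      MulOpposite.op (conjElem G H K g l) • f x}
  add_mem' := by
    intro a b ha hb x l
    simp only [Pi.add_apply, ha x l, hb x l, smul_add]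
  zero_mem' := by intro x l; simp
  smul_mem' := by
    intro r f hf x l
    simp only [Pi.smul_apply, hf x l]
    exact (smul_comm (MulOpposite.op (conjElem G H K g l)) r (f x)).symm

/-- The right action of `k ∈ K` on the model of `Res^G_K Ind^G_H M`:
`(f·k)(x) = f (k·x)`. -/
def resIndSMul (H K : Subgroup G) (M : Type*) [AddCommGroup M]
    [Module Rᵐᵒᵖ M] [DistribMulAction (↥H)ᵐᵒᵖ M]
    [SMulCommClass (↥H)ᵐᵒᵖ Rᵐᵒᵖ M] (k : K) (f : IndGH R G H M) :
    IndGH R G H M :=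
  ⟨fun x => (f : G → M) ((k : G) * x), by
    intro x h
    have := f.2 ((k : G) * x) h
    simpa [mul_assoc] using this⟩

/-- The right action of `k ∈ K` on the model of `Ind^K_{L_g} (M·g)`:
`(f·k)(x) = f (k·x)`. -/
def indKSMul (H K : Subgroup G) (g : G) (M : Type*) [AddCommGroup M]
    [Module Rᵐᵒᵖ M] [DistribMulAction (↥H)ᵐᵒᵖ M]
    [SMulCommClass (↥H)ᵐᵒᵖ Rᵐᵒᵖ M] (k : K) (f : IndKL R G H K g M) :
    IndKL R G H K g M :=
  ⟨fun x => (f : K → M) (k * x), by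
    intro x l
    have := f.2 (k * x) l
    simpa [mul_assoc] using this⟩

namespace Mackey

variable {R G}
variable {H K : Subgroup G} {M : Type*} [AddCommGroup M] [Module Rᵐᵒᵖ M]
  [DistribMulAction (↥H)ᵐᵒᵖ M] [SMulCommClass (↥H)ᵐᵒᵖ Rᵐᵒᵖ M]

theorem mem_interConj_iff {g l : G} : l ∈ interConj G H K g ↔ l ∈ K ∧ g * l * g⁻¹ ∈ H := by
  refine Subgroup.mem_inf.trans (and_congr_right fun _ => ?_)
  rw [Subgroup.mem_map_equiv]
  simp

theorem coe_conjElem (g : G) (l : interConj G H K g) :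
    (conjElem G H K g l : G) = g * l * g⁻¹ :=
  rfl

theorem IndKL.smul_apply_eq_of_mul_eq {d : G} (F : IndKL R G H K d M) {k₁ k₂ : K} {h₁ h₂ : H}
    (heq : (k₁ : G) * d⁻¹ * h₁ = k₂ * d⁻¹ * h₂) :
    MulOpposite.op h₁ • (F : K → M) k₁ = MulOpposite.op h₂ • (F : K → M) k₂ := by
  have hconj : d * (k₂⁻¹ * k₁ : K) * d⁻¹ = (h₂ * h₁⁻¹ : H) := by
    have hk₁ : (k₁ : G) = k₂ * d⁻¹ * h₂ * (h₁ : G)⁻¹ * d := by rw [← heq]; group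
    simp only [Subgroup.coe_mul, Subgroup.coe_inv, hk₁]
    group
  have hl : ((k₂⁻¹ * k₁ : K) : G) ∈ interConj G H K d :=
    mem_interConj_iff.mpr ⟨(k₂⁻¹ * k₁).2, hconj ▸ (h₂ * h₁⁻¹).2⟩
  have hF := F.2 k₂ ⟨_, hl⟩
  have hk : k₂ * ⟨(k₂⁻¹ * k₁ : K), (Subgroup.mem_inf.mp hl).1⟩ = k₁ := by
    ext; simp
  have hh : conjElem G H K d ⟨_, hl⟩ = h₂ * h₁⁻¹ := Subtype.ext hconj
  rw [hk, hh] at hF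
  rw [hF, smul_smul, ← MulOpposite.op_mul, inv_mul_cancel_right]

variable (R) in
def IndGH.toIndKL (d : G) : IndGH R G H M →ₗ[Rᵐᵒᵖ] IndKL R G H K d M where
  toFun f := ⟨fun k => (f : G → M) (k * d⁻¹), fun k l => by
    have hf := f.2 (k * d⁻¹) (conjElem G H K d l)
    rw [coe_conjElem] at hf
    simpa [mul_assoc] using hf⟩
  map_add' _ _ := rfl
  map_smul' _ _ := rfl

theorem IndGH.toIndKL_apply (d : G) (f : IndGH R G H M) (k : K) :
    (IndGH.toIndKL R (K := K) d f : K → M) k = (f : G → M) (k * d⁻¹) :=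
  rfl

theorem IndGH.toIndKL_resIndSMul (d : G) (k : K) (f : IndGH R G H M) :
    IndGH.toIndKL R d (resIndSMul R G H K M k f) =
      indKSMul R G H K d M k (IndGH.toIndKL R d f) := by
  ext x
  simp [IndGH.toIndKL, resIndSMul, indKSMul, mul_assoc]

def IsDoubleCosetReps (H K : Subgroup G) (D : Set G) : Prop :=
  ∀ x : G, ∃! d, d ∈ D ∧ ∃ h ∈ H, ∃ k ∈ K, x = h * d * k

namespace IsDoubleCosetReps

variable {D : Set G}

theorem exists_eq_mul_inv_mul (hD : IsDoubleCosetReps H K D) (y : G) :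
    ∃ p : D × K × H, y = p.2.1 * (p.1 : G)⁻¹ * p.2.2 := by
  obtain ⟨d, ⟨hd, h, hh, k, hk, hy⟩, -⟩ := hD y⁻¹
  refine ⟨(⟨d, hd⟩, ⟨k, hk⟩⁻¹, ⟨h, hh⟩⁻¹), ?_⟩
  simp only [Subgroup.coe_inv, ← mul_inv_rev, ← mul_assoc, ← hy, inv_inv]

theorem eq_of_mul_inv_mul_eq (hD : IsDoubleCosetReps H K D) {d₁ d₂ : G} (hd₁ : d₁ ∈ D)
    (hd₂ : d₂ ∈ D) {k₁ k₂ : K} {h₁ h₂ : H}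
    (heq : (k₁ : G) * d₁⁻¹ * h₁ = k₂ * d₂⁻¹ * h₂) : d₁ = d₂ := by
  refine (hD (h₁⁻¹ * d₁ * k₁⁻¹ : G)).unique
    ⟨hd₁, _, (h₁⁻¹).2, _, (k₁⁻¹).2, rfl⟩ ⟨hd₂, _, (h₂⁻¹).2, _, (k₂⁻¹).2, ?_⟩
  rw [← inv_inj]
  simpa [mul_assoc] using heq

end IsDoubleCosetReps

section Glue

variable {D : Set G} (hD : IsDoubleCosetReps H K D) (F : ∀ d : D, IndKL R G H K d M)

noncomputable def IndKL.glue (y : G) : M :=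
  let p := (hD.exists_eq_mul_inv_mul y).choose
  MulOpposite.op p.2.2 • (F p.1 : K → M) p.2.1

theorem IndKL.glue_apply {d : G} (hd : d ∈ D) (k : K) (h : H) :
    IndKL.glue hD F (k * d⁻¹ * h) = MulOpposite.op h • (F ⟨d, hd⟩ : K → M) k := by
  have hspec := (hD.exists_eq_mul_inv_mul (k * d⁻¹ * h)).choose_spec
  simp only [IndKL.glue]
  generalize (hD.exists_eq_mul_inv_mul (k * d⁻¹ * h)).choose = p at hspec ⊢
  obtain ⟨⟨d', hd'⟩, k', h'⟩ := p
  obtain rfl := hD.eq_of_mul_inv_mul_eq hd hd' hspec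
  exact IndKL.smul_apply_eq_of_mul_eq (F ⟨d, hd⟩) hspec.symm

theorem IndKL.glue_mem : IndKL.glue hD F ∈ IndGH R G H M := by
  intro y h₀
  obtain ⟨⟨⟨d, hd⟩, k, h⟩, rfl⟩ := hD.exists_eq_mul_inv_mul y
  rw [mul_assoc _ (h : G), ← Subgroup.coe_mul, IndKL.glue_apply hD F hd,
    IndKL.glue_apply hD F hd, smul_smul, ← MulOpposite.op_mul]

end Glue

theorem IndGH.toIndKL_pi_bijective {D : Set G} (hD : IsDoubleCosetReps H K D) :
    Function.Bijective
      (LinearMap.pi fun d : D => IndGH.toIndKL R (H := H) (K := K) (M := M) (d : G)) := by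
  constructor
  · intro f₁ f₂ hf
    ext y
    obtain ⟨⟨d, k, h⟩, rfl⟩ := hD.exists_eq_mul_inv_mul y
    have hfd := congr_arg (fun F => (F d : K → M) k) hf
    simp only [LinearMap.pi_apply, IndGH.toIndKL_apply] at hfd
    rw [f₁.2, f₂.2, hfd]
  · intro F
    refine ⟨⟨IndKL.glue hD F, IndKL.glue_mem hD F⟩, funext fun d => ?_⟩
    ext k
    change IndKL.glue hD F (k * (d : G)⁻¹) = _
    simpa using IndKL.glue_apply hD F d.2 k 1

end Mackey

theorem mackey_formula_finite_general
    (R : Type*) [Ring R] (G : Type*) [Group G]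
    (H K : Subgroup G)
    (M : Type*) [AddCommGroup M] [Module Rᵐᵒᵖ M]
    [DistribMulAction (↥H)ᵐᵒᵖ M] [SMulCommClass (↥H)ᵐᵒᵖ Rᵐᵒᵖ M]
    (D : Finset G)
    (hD : ∀ x : G, ∃! d, d ∈ D ∧ ∃ h ∈ H, ∃ k ∈ K, x = h * d * k) :
    ∃ e : IndGH R G H M ≃ₗ[Rᵐᵒᵖ] (∀ d : D, IndKL R G H K (d : G) M),
      ∀ (f : IndGH R G H M) (k : K),
        e (resIndSMul R G H K M k f) =
          fun d : D => indKSMul R G H K (d : G) M k (e f d) := by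
  have hreps : Mackey.IsDoubleCosetReps H K (D : Set G) := hD
  refine ⟨LinearEquiv.ofBijective _ (Mackey.IndGH.toIndKL_pi_bijective hreps), fun f k => ?_⟩
  funext d
  exact Mackey.IndGH.toIndKL_resIndSMul (d : G) k f

/-- Mackey's formula for finite groups: for subgroups `H, K` of a finite
group `G` and a right `R[H]`-module `M`,
`Res^G_K Ind^G_H M ≅ ⊕_{g ∈ H\G/K} Ind^K_{K ∩ g⁻¹Hg} Res^{g⁻¹Hg}_{K ∩ g⁻¹Hg} (M·g)`
as right `R[K]`-modules, the sum being over a set `D` of representatives of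
the double cosets `H\G/K`. -/
theorem mackey_formula_finite
    (R : Type*) [Ring R] (G : Type*) [Group G] [Fintype G]
    (H K : Subgroup G)
    (M : Type*) [AddCommGroup M] [Module Rᵐᵒᵖ M]
    [DistribMulAction (↥H)ᵐᵒᵖ M] [SMulCommClass (↥H)ᵐᵒᵖ Rᵐᵒᵖ M]
    (D : Finset G)
    (hD : ∀ x : G, ∃! d, d ∈ D ∧ ∃ h ∈ H, ∃ k ∈ K, x = h * d * k) :
    ∃ e : IndGH R G H M ≃ₗ[Rᵐᵒᵖ] (∀ d : D, IndKL R G H K (d : G) M),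
      ∀ (f : IndGH R G H M) (k : K),
        e (resIndSMul R G H K M k f) =
          fun d : D => indKSMul R G H K (d : G) M k (e f d) :=
  mackey_formula_finite_general R G H K M D hD
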